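/- If strong union and decomposition are sound for the additive implication problem relative to a class F of set functions, then F has the zero-density property: for every F ∈ F, every CI statement c, and every U ∈ L(c), if F a-satisfies c then ΔF(U) = 0. -/

import Mathlib

open Finset

/-- A CI statement (A ⊥ B | C): pairwise disjoint finsets. -/
structure CI (α : Type*) [DecidableEq α] where
  A : Finset α
  B : Finset α
  C : Finset α
  dAB : Disjoint A B
  dAC : Disjoint A C
  dBC : Disjoint B C

def ciLattice {α : Type*} [Fintype α] [DecidableEq α] (c : CI α) : Set (Finset α) :=
  {U | c.C ⊆ U ∧ ¬ c.A ⊆ U ∧ ¬ c.B ⊆ U}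

/-- Derivability under system A: triviality, symmetry, decomposition, contraction,
strong union, strong contraction. -/
inductive Derivable {α : Type*} [DecidableEq α] (𝒞 : Set (CI α)) : CI α → Prop
  | mem {c : CI α} : c ∈ 𝒞 → Derivable 𝒞 c
  | triviality (A C : Finset α) (hAC : Disjoint A C) :
      Derivable 𝒞 ⟨A, ∅, C, by simp, hAC, by simp⟩
  | symmetry {A B C : Finset α} {h1 : Disjoint A B} {h2 : Disjoint A C} {h3 : Disjoint B C} :
      Derivable 𝒞 ⟨A, B, C, h1, h2, h3⟩ →
      Derivable 𝒞 ⟨B, A, C, h1.symm, h3, h2⟩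
  | decomposition {A B D C : Finset α} {h1 : Disjoint A (B ∪ D)} {h2 : Disjoint A C}
      {h3 : Disjoint (B ∪ D) C} :
      Derivable 𝒞 ⟨A, B ∪ D, C, h1, h2, h3⟩ →
      Derivable 𝒞 ⟨A, D, C, by simp_all [Finset.disjoint_union_right],
        h2, by simp_all [Finset.disjoint_union_left]⟩
  | contraction {A B D C : Finset α} {h1 : Disjoint A B} {h2 : Disjoint A (C ∪ D)}
      {h3 : Disjoint B (C ∪ D)} {h4 : Disjoint A D} {h5 : Disjoint D C}
      (hBD : Disjoint B D) :
      Derivable 𝒞 ⟨A, B, C ∪ D, h1, h2, h3⟩ →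
      Derivable 𝒞 ⟨A, D, C, h4, by simp_all [Finset.disjoint_union_right], h5⟩ →
      Derivable 𝒞 ⟨A, B ∪ D, C, by simp_all [Finset.disjoint_union_right],
        by simp_all [Finset.disjoint_union_right],
        by simp_all [Finset.disjoint_union_left, Finset.disjoint_union_right]⟩
  | strongUnion {A B C D : Finset α} {h1 : Disjoint A B} {h2 : Disjoint A C}
      {h3 : Disjoint B C} (hAD : Disjoint A D) (hBD : Disjoint B D) :
      Derivable 𝒞 ⟨A, B, C, h1, h2, h3⟩ →
      Derivable 𝒞 ⟨A, B, C ∪ D, h1, by simp_all [Finset.disjoint_union_right],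
        by simp_all [Finset.disjoint_union_right]⟩
  | strongContraction {A B C D E : Finset α}
      {h1 : Disjoint A B} {h2 : Disjoint A C} {h3 : Disjoint B C}
      {h4 : Disjoint D E} {h5 : Disjoint D (A ∪ C)} {h6 : Disjoint E (A ∪ C)}
      {h7 : Disjoint D (B ∪ C)} {h8 : Disjoint E (B ∪ C)} :
      Derivable 𝒞 ⟨A, B, C, h1, h2, h3⟩ →
      Derivable 𝒞 ⟨D, E, A ∪ C, h4, h5, h6⟩ →
      Derivable 𝒞 ⟨D, E, B ∪ C, h4, h7, h8⟩ →
      Derivable 𝒞 ⟨D, E, C, h4, by simp_all [Finset.disjoint_union_right],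
        by simp_all [Finset.disjoint_union_right]⟩

def asat {α : Type*} [DecidableEq α] (F : Finset α → ℝ) (c : CI α) : Prop :=
  F c.C + F (c.A ∪ c.B ∪ c.C) = F (c.A ∪ c.C) + F (c.B ∪ c.C)

def density {α : Type*} [Fintype α] [DecidableEq α] (F : Finset α → ℝ)
    (X : Finset α) : ℝ :=
  ∑ U ∈ Finset.univ.powerset.filter (fun U => X ⊆ U),
    (-1 : ℝ) ^ (U.card - X.card) * F U

/-!
Pick `a ∈ A \ U` and `b ∈ B \ U`. Decomposition, applied on both sides of the statement,
gives `({a} ⊥ {b} | C)`, and strong union then gives `({a} ⊥ {b} | V)` for every `V ⊇ U`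
avoiding `a` and `b`: the second difference of `F` in the directions `a`, `b` vanishes at `V`.
Splitting the Möbius sum `ΔF(U)` according to membership of `a` and of `b` writes it as a signed
sum of exactly these second differences.
-/

lemma sum_Icc_eq_sum_powerset_sdiff {α β : Type*} [DecidableEq α] [AddCommMonoid β]
    {s t : Finset α} (hst : s ⊆ t) (g : Finset α → β) :
    ∑ W ∈ Icc s t, g W = ∑ T ∈ (t \ s).powerset, g (s ∪ T) := by
  rw [Icc_eq_image_powerset hst, sum_image]
  intro T hT T' hT' h
  rw [coe_powerset, Set.mem_preimage, Set.mem_powerset_iff, coe_subset] at hT hT'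
  rw [← union_sdiff_cancel_left (disjoint_sdiff.mono_right hT),
    ← union_sdiff_cancel_left (disjoint_sdiff.mono_right hT'), show s ∪ T = s ∪ T' from h]

lemma sum_powerset_insert_neg_one_pow {α R : Type*} [DecidableEq α] [CommRing R]
    {s : Finset α} {a : α} (ha : a ∉ s) (g : Finset α → R) :
    ∑ T ∈ (insert a s).powerset, (-1 : R) ^ #T * g T
      = ∑ T ∈ s.powerset, (-1 : R) ^ #T * (g T - g (insert a T)) := by
  rw [sum_powerset_insert ha, ← sum_add_distrib]
  refine sum_congr rfl fun T hT => ?_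
  rw [card_insert_of_notMem (notMem_mono (mem_powerset.1 hT) ha), pow_succ]
  ring

lemma density_eq_sum_powerset_sdiff {α : Type*} [Fintype α] [DecidableEq α]
    (F : Finset α → ℝ) (U : Finset α) :
    density F U = ∑ T ∈ (univ \ U).powerset, (-1 : ℝ) ^ #T * F (U ∪ T) := by
  rw [density, ← Icc_eq_filter_powerset, sum_Icc_eq_sum_powerset_sdiff (subset_univ U)]
  refine sum_congr rfl fun T hT => ?_
  rw [card_union_of_disjoint (disjoint_sdiff.mono_right (mem_powerset.1 hT)),
    Nat.add_sub_cancel_left]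

lemma density_eq_zero_of_forall_modular {α : Type*} [Fintype α] [DecidableEq α]
    {F : Finset α → ℝ} {U : Finset α} {a b : α} (hab : a ≠ b) (haU : a ∉ U) (hbU : b ∉ U)
    (hF : ∀ V, U ⊆ V → a ∉ V → b ∉ V →
      F V + F (insert a (insert b V)) = F (insert a V) + F (insert b V)) :
    density F U = 0 := by
  set s := ((univ \ U).erase a).erase b
  have hbs : b ∉ s := notMem_erase b _
  have has : a ∉ insert b s := by simp [s, hab]
  have hU : univ \ U = insert a (insert b s) := by
    rw [insert_erase (mem_erase.2 ⟨hab.symm, by simpa using hbU⟩),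
      insert_erase (by simpa using haU)]
  rw [density_eq_sum_powerset_sdiff, hU, sum_powerset_insert_neg_one_pow has,
    sum_powerset_insert_neg_one_pow hbs]
  refine sum_eq_zero fun T hT => ?_
  have hTs := mem_powerset.1 hT
  have haT : a ∉ T := fun h => has (mem_insert_of_mem (hTs h))
  have hbT : b ∉ T := fun h => hbs (hTs h)
  simp only [union_insert]
  linear_combination (-1 : ℝ) ^ #T *
    hF (U ∪ T) subset_union_left (by simp [haU, haT]) (by simp [hbU, hbT])

section Rules

variable {α : Type*} [DecidableEq α]

def CI.symm (c : CI α) : CI α := ⟨c.B, c.A, c.C, c.dAB.symm, c.dBC, c.dAC⟩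

def SatisfiesDecomposition (F : Finset α → ℝ) : Prop :=
  ∀ (A B D C : Finset α) (h1 : Disjoint A (B ∪ D)) (h2 : Disjoint A C)
    (h3 : Disjoint (B ∪ D) C),
    asat F ⟨A, B ∪ D, C, h1, h2, h3⟩ →
    asat F ⟨A, D, C, (disjoint_union_right.1 h1).2, h2, (disjoint_union_left.1 h3).2⟩

def SatisfiesStrongUnion (F : Finset α → ℝ) : Prop :=
  ∀ (A B C D : Finset α) (h1 : Disjoint A B) (h2 : Disjoint A C) (h3 : Disjoint B C)
    (hAD : Disjoint A D) (hBD : Disjoint B D),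
    asat F ⟨A, B, C, h1, h2, h3⟩ →
    asat F ⟨A, B, C ∪ D, h1, disjoint_union_right.2 ⟨h2, hAD⟩,
      disjoint_union_right.2 ⟨h3, hBD⟩⟩

variable {F : Finset α → ℝ}

lemma asat_symm (c : CI α) : asat F c.symm ↔ asat F c := by
  rw [asat, asat, CI.symm, union_comm c.B c.A, add_comm (F (c.B ∪ c.C))]

lemma asat_singleton_singleton_iff {a b : α} {V : Finset α} {h1 : Disjoint {a} {b}}
    {h2 : Disjoint {a} V} {h3 : Disjoint {b} V} :
    asat F ⟨{a}, {b}, V, h1, h2, h3⟩ ↔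
      F V + F (insert a (insert b V)) = F (insert a V) + F (insert b V) := by
  simp only [asat, ← insert_eq, insert_union]

lemma SatisfiesDecomposition.asat_of_subset_right (hF : SatisfiesDecomposition F)
    {c : CI α} (hc : asat F c) {D : Finset α} (hD : D ⊆ c.B) :
    asat F ⟨c.A, D, c.C, c.dAB.mono_right hD, c.dAC, c.dBC.mono_left hD⟩ := by
  have hB : c.B \ D ∪ D = c.B := sdiff_union_of_subset hD
  exact hF c.A (c.B \ D) D c.C (by rw [hB]; exact c.dAB) c.dAC (by rw [hB]; exact c.dBC)
    (by simpa only [asat, hB] using hc)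

lemma SatisfiesDecomposition.asat_singleton_singleton (hF : SatisfiesDecomposition F)
    {c : CI α} (hc : asat F c) {a b : α} (ha : a ∈ c.A) (hb : b ∈ c.B) :
    asat F ⟨{a}, {b}, c.C, c.dAB.mono (singleton_subset_iff.2 ha) (singleton_subset_iff.2 hb),
      c.dAC.mono_left (singleton_subset_iff.2 ha),
      c.dBC.mono_left (singleton_subset_iff.2 hb)⟩ := by
  have hAb := hF.asat_of_subset_right hc (singleton_subset_iff.2 hb)
  exact (asat_symm _).1
    (hF.asat_of_subset_right ((asat_symm _).2 hAb) (D := {a}) (singleton_subset_iff.2 ha))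

lemma SatisfiesStrongUnion.asat_of_cond_subset (hF : SatisfiesStrongUnion F)
    {c : CI α} (hc : asat F c) {V : Finset α} (hCV : c.C ⊆ V) (hAV : Disjoint c.A V)
    (hBV : Disjoint c.B V) :
    asat F ⟨c.A, c.B, V, c.dAB, hAV, hBV⟩ := by
  have := hF c.A c.B c.C (V \ c.C) c.dAB c.dAC c.dBC (hAV.mono_right sdiff_subset)
    (hBV.mono_right sdiff_subset) hc
  simpa only [asat, union_sdiff_of_subset hCV] using this

end Rules

/-- If strong union and decomposition are sound for the additive implication
problem relative to ℱ, then ℱ has the zero-density property. -/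
theorem strongUnion_decomposition_sound_implies_zeroDensity
    {α : Type*} [Fintype α] [DecidableEq α] (ℱ : Set (Finset α → ℝ))
    (hSU : ∀ F ∈ ℱ, ∀ (A B C D : Finset α)
      (h1 : Disjoint A B) (h2 : Disjoint A C) (h3 : Disjoint B C)
      (hAD : Disjoint A D) (hBD : Disjoint B D),
      asat F ⟨A, B, C, h1, h2, h3⟩ →
      asat F ⟨A, B, C ∪ D, h1, by simp_all [Finset.disjoint_union_right],
        by simp_all [Finset.disjoint_union_right]⟩)
    (hDec : ∀ F ∈ ℱ, ∀ (A B D C : Finset α)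
      (h1 : Disjoint A (B ∪ D)) (h2 : Disjoint A C) (h3 : Disjoint (B ∪ D) C),
      asat F ⟨A, B ∪ D, C, h1, h2, h3⟩ →
      asat F ⟨A, D, C, by simp_all [Finset.disjoint_union_right], h2,
        by simp_all [Finset.disjoint_union_left]⟩) :
    ∀ F ∈ ℱ, ∀ c : CI α, ∀ U ∈ ciLattice c, asat F c → density F U = 0 := by
  intro F hF c U ⟨hCU, hAU, hBU⟩ hc
  obtain ⟨a, haA, haU⟩ := not_subset.1 hAU
  obtain ⟨b, hbB, hbU⟩ := not_subset.1 hBU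
  have hab : a ≠ b := (ne_of_mem_of_not_mem hbB (disjoint_left.1 c.dAB haA)).symm
  have hsingle := SatisfiesDecomposition.asat_singleton_singleton (hDec F hF) hc haA hbB
  exact density_eq_zero_of_forall_modular hab haU hbU fun V hUV haV hbV =>
    asat_singleton_singleton_iff.1 <| SatisfiesStrongUnion.asat_of_cond_subset (hSU F hF) hsingle
      (hCU.trans hUV) (disjoint_singleton_left.2 haV) (disjoint_singleton_left.2 hbV)
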